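/- Let G be an effective Hausdorff ample groupoid with second countable unit space and let k be a field. Then the convolution algebra kG is prime if and only if it is primitive. -/

import Mathlib

universe u

/-- An étale topological groupoid: arrows form a topological space, units are
identified with idempotent arrows via the domain map `d` and range map `r`;
the domain map is a local homeomorphism. -/
structure EtaleGroupoid : Type (u + 1) where
  Arr : Type u
  top : TopologicalSpace Arr
  d : Arr → Arr
  r : Arr → Arr
  comp : Arr → Arr → Arr
  inv : Arr → Arr
  d_d : ∀ g, d (d g) = d g
  r_d : ∀ g, r (d g) = d g
  d_r : ∀ g, d (r g) = r g
  r_r : ∀ g, r (r g) = r g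
  d_comp : ∀ g h, d g = r h → d (comp g h) = d h
  r_comp : ∀ g h, d g = r h → r (comp g h) = r g
  comp_assoc : ∀ g h k, d g = r h → d h = r k → comp (comp g h) k = comp g (comp h k)
  comp_unit_right : ∀ g, comp g (d g) = g
  comp_unit_left : ∀ g, comp (r g) g = g
  d_inv : ∀ g, d (inv g) = r g
  r_inv : ∀ g, r (inv g) = d g
  inv_inv : ∀ g, inv (inv g) = g
  inv_comp : ∀ g, comp (inv g) g = d g
  comp_inv : ∀ g, comp g (inv g) = r g
  continuous_d : @Continuous Arr Arr top top d
  continuous_r : @Continuous Arr Arr top top r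
  continuous_inv : @Continuous Arr Arr top top inv
  continuous_comp : @Continuous {p : Arr × Arr // d p.1 = r p.2} Arr
    (@instTopologicalSpaceSubtype _ _ (@instTopologicalSpaceProd _ _ top top)) top
    (fun p => comp p.val.1 p.val.2)
  etale : ∀ g : Arr, ∃ U : Set Arr, @IsOpen Arr top U ∧ g ∈ U ∧ Set.InjOn d U ∧
    ∀ V, V ⊆ U → @IsOpen Arr top V → @IsOpen Arr top (d '' V)

instance (G : EtaleGroupoid) : TopologicalSpace G.Arr := G.top

namespace EtaleGroupoid

variable (G : EtaleGroupoid)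

/-- The unit space `G⁽⁰⁾`, identified with the set of unit arrows. -/
def units : Set G.Arr := Set.range G.d

/-- A subset of the unit space is invariant if it is a union of orbits. -/
def Invariant (X : Set G.Arr) : Prop := ∀ g : G.Arr, G.d g ∈ X → G.r g ∈ X

/-- The orbit of a unit `x`. -/
def orbit (x : G.Arr) : Set G.Arr := {y | ∃ g, G.d g = x ∧ G.r g = y}

/-- `U` is an open subset of the unit space (open in the subspace topology). -/
def UnitsOpen (U : Set G.Arr) : Prop :=
  U ⊆ G.units ∧ IsOpen (Subtype.val ⁻¹' U : Set ↥G.units)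

/-- `C` is a closed subset of the unit space (closed in the subspace topology). -/
def UnitsClosed (C : Set G.Arr) : Prop :=
  C ⊆ G.units ∧ IsClosed (Subtype.val ⁻¹' C : Set ↥G.units)

/-- `X` is dense in the unit space. -/
def UnitsDense (X : Set G.Arr) : Prop :=
  Dense (Subtype.val ⁻¹' X : Set ↥G.units)

/-- `X` is nowhere dense in the unit space. -/
def UnitsNowhereDense (X : Set G.Arr) : Prop :=
  interior (closure (Subtype.val ⁻¹' X : Set ↥G.units)) = ∅

/-- Topological transitivity: every non-empty open invariant subset of the
unit space is dense. -/
def TopTransitive : Prop :=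
  ∀ U : Set G.Arr, G.UnitsOpen U → G.Invariant U → U.Nonempty → G.UnitsDense U

end EtaleGroupoid

namespace EtaleGroupoid

variable (G : EtaleGroupoid)

/-- The underlying set of the groupoid convolution algebra `RG`: the `R`-span of
characteristic functions of compact open subsets of the arrow space. -/
def AlgebraSet (R : Type) [CommRing R] : Set (G.Arr → R) :=
  (Submodule.span R {f : G.Arr → R | ∃ U : Set G.Arr,
      IsCompact U ∧ IsOpen U ∧ f = Set.indicator U fun _ => (1 : R)} :
    Submodule R (G.Arr → R))

/-- Convolution: `(f ⋆ g)(x) = ∑_{d h = d x} f (x h⁻¹) g (h)`. -/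
noncomputable def conv {R : Type} [CommRing R] (f g : G.Arr → R) : G.Arr → R := fun x =>
  ∑ᶠ (h : G.Arr) (_ : G.d h = G.d x), f (G.comp x (G.inv h)) * g h

/-- The convolution algebra `RG` is a prime ring (elementwise formulation). -/
def AlgPrime (R : Type) [CommRing R] : Prop :=
  (∃ f ∈ G.AlgebraSet R, f ≠ 0) ∧
  ∀ f ∈ G.AlgebraSet R, ∀ g ∈ G.AlgebraSet R,
    (∀ h ∈ G.AlgebraSet R, G.conv (G.conv f h) g = 0) → f = 0 ∨ g = 0

/-- The convolution algebra `RG` is a semiprime ring (elementwise formulation). -/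
def AlgSemiprime (R : Type) [CommRing R] : Prop :=
  ∀ f ∈ G.AlgebraSet R, (∀ h ∈ G.AlgebraSet R, G.conv (G.conv f h) f = 0) → f = 0

/-- `X ⊆ G⁽⁰⁾` is `R`-dense: every non-zero element of `RG` is non-zero at some
arrow whose domain lies in `X`. -/
def RDense (R : Type) [CommRing R] (X : Set G.Arr) : Prop :=
  ∀ f ∈ G.AlgebraSet R, f ≠ (0 : G.Arr → R) → ∃ g : G.Arr, f g ≠ 0 ∧ G.d g ∈ X

/-- An étale groupoid is ample if its unit space is (locally compact) Hausdorff
with a basis of compact open sets. -/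
def Ample : Prop :=
  T2Space ↥G.units ∧
  ∀ x ∈ G.units, ∀ U : Set G.Arr, G.UnitsOpen U → x ∈ U →
    ∃ K : Set G.Arr, K ⊆ U ∧ x ∈ K ∧ IsCompact K ∧ G.UnitsOpen K

/-- A groupoid is effective if the interior of the isotropy bundle is the unit
space. -/
def Effective : Prop := interior {g : G.Arr | G.d g = G.r g} = G.units

end EtaleGroupoid

/-- A (possibly non-unital) ring is (left) primitive: it admits a faithful
irreducible representation. -/
def IsPrimitiveRingE (A : Type u) [Add A] [Mul A] [Zero A] : Prop :=
  ∃ (M : Type u) (_ : AddCommGroup M) (ρ : A → M → M),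
    (∀ a b m, ρ (a + b) m = ρ a m + ρ b m) ∧
    (∀ a m m', ρ a (m + m') = ρ a m + ρ a m') ∧
    (∀ a b m, ρ (a * b) m = ρ a (ρ b m)) ∧
    (∃ a m, ρ a m ≠ 0) ∧
    (∀ N : AddSubgroup M, (∀ a : A, ∀ m ∈ N, ρ a m ∈ N) → N = ⊥ ∨ N = ⊤) ∧
    (∀ a : A, (∀ m : M, ρ a m = 0) → a = 0)

/-- A (possibly non-unital) ring is prime. -/
def IsPrimeRingE (A : Type u) [Mul A] [Zero A] : Prop :=
  (∃ a : A, a ≠ 0) ∧ ∀ a b : A, (∀ x : A, a * x * b = 0) → a = 0 ∨ b = 0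

/-!
Primitive rings are prime. Conversely, if `kG` is prime then `G` is topologically transitive: for
compact open sets of units `K ⊆ U` and `L ⊆ V`, with `U` invariant and disjoint from `V`, one has
`1_L * kG * 1_K = 0`. As the unit space is second countable and Baire, topological transitivity
yields a dense orbit `O`, and `kG` acts on the finitely supported functions on `O` by
`(f • m) y = ∑_{r g = y} f g * m (d g)`. This module is simple, since indicators of compact open
sets of units isolate point masses and compact open slices of `d` move them along `O`. It is
faithful because, by effectiveness, the units that are the source of two distinct parallel arrows of
`supp f` form a nowhere dense set; at a point `z ∈ O ∩ d (supp f)` off this set, `f • δ_z` picks up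
a single non-zero value of `f`.
-/

open Function Set

section Finsum

variable {α β M : Type*} [AddCommMonoid M]

theorem finsum_mem_eq_single_of_mem {s : Set α} {f : α → M} {a : α} (ha : a ∈ s)
    (h : ∀ x ∈ s, x ≠ a → f x = 0) : ∑ᶠ x ∈ s, f x = f a := by
  rw [finsum_mem_def, finsum_eq_single _ a, indicator_of_mem ha]
  intro x hx
  by_cases hxs : x ∈ s
  · rw [indicator_of_mem hxs, h x hxs hx]
  · rw [indicator_of_notMem hxs]

theorem finsum_mem_finsum_mem_eq_finsum_mem_prod {s : Set α} {t : α → Set β} {f : α → β → M}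
    (hf : ({p : α × β | p.1 ∈ s ∧ p.2 ∈ t p.1} ∩ support (uncurry f)).Finite) :
    ∑ᶠ a ∈ s, ∑ᶠ b ∈ t a, f a b = ∑ᶠ p ∈ {p : α × β | p.1 ∈ s ∧ p.2 ∈ t p.1}, f p.1 p.2 := by
  rw [finsum_mem_def, finsum_mem_def, finsum_curry]
  · refine finsum_congr fun a => ?_
    by_cases ha : a ∈ s
    · simp only [finsum_mem_def, indicator, mem_ofPred_eq]
      rw [if_pos ha]
      exact finsum_congr fun b => by split_ifs <;> tauto
    · simp [ha]
  · rw [HasFiniteSupport, support_indicator]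
    exact hf

end Finsum

theorem sum_pi_single_eq_of_support_subset {ι M : Type*} [DecidableEq ι] [AddCommMonoid M]
    (m : ι → M) {s : Finset ι} (hs : support m ⊆ s) : ∑ i ∈ s, Pi.single i (m i) = m := by
  funext y
  rw [Finset.sum_apply, Finset.sum_pi_single]
  split_ifs with hy
  · rfl
  · exact (not_not.1 fun hne => hy (hs hne)).symm

theorem IsLocallyInjective.finite_inter_preimage {X Y : Type*} [TopologicalSpace X] {p : X → Y}
    (hp : IsLocallyInjective p) {C : Set X} (hC : IsCompact C) {T : Set Y} (hT : T.Finite) :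
    (C ∩ p ⁻¹' T).Finite := by
  choose U hUo hxU hUinj using hp
  obtain ⟨t, htC⟩ := hC.elim_finite_subcover U hUo fun x _ => mem_iUnion.2 ⟨x, hxU x⟩
  have hfin : ∀ x, (U x ∩ p ⁻¹' T).Finite := fun x =>
    Finite.of_finite_image (hT.subset ((image_mono inter_subset_right).trans
      (image_preimage_subset p T))) ((hUinj x).mono inter_subset_left)
  refine (t.finite_toSet.biUnion fun x _ => hfin x).subset fun y ⟨hyC, hyT⟩ => ?_
  obtain ⟨x, hx, hyx⟩ := mem_iUnion₂.1 (htC hyC)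
  exact mem_biUnion hx ⟨hyx, hyT⟩

theorem IsNowhereDense.union {X : Type*} [TopologicalSpace X] {s t : Set X}
    (hs : IsNowhereDense s) (ht : IsNowhereDense t) : IsNowhereDense (s ∪ t) := by
  rw [IsNowhereDense, closure_union,
    interior_union_isClosed_of_interior_empty isClosed_closure ht, hs]

theorem isNowhereDense_biUnion {ι X : Type*} [TopologicalSpace X] (s : Finset ι) {f : ι → Set X}
    (hf : ∀ i ∈ s, IsNowhereDense (f i)) : IsNowhereDense (⋃ i ∈ s, f i) := by
  classical
  induction s using Finset.induction_on with
  | empty => simp [isNowhereDense_empty]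
  | insert a s _ ih =>
    rw [Finset.set_biUnion_insert]
    exact (hf a (Finset.mem_insert_self a s)).union
      (ih fun i hi => hf i (Finset.mem_insert_of_mem hi))

/-- If `aAb = 0` and `b ≠ 0`, the invariant subgroup `{m | a A m = 0}` contains `b M ≠ 0`, so it is
everything; hence `a` kills the invariant subgroup generated by `A M`, which is all of `M`. -/
theorem IsPrimitiveRingE.isPrimeRingE {A : Type u} [NonUnitalRing A] (h : IsPrimitiveRingE A) :
    IsPrimeRingE A := by
  obtain ⟨M, _, ρ, hadd, hmadd, hmul, ⟨a₀, m₀, hne⟩, hsimple, hfaith⟩ := h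
  let ρ' : A → M →+ M := fun a => AddMonoidHom.mk' (ρ a) (hmadd a)
  have hzero : ∀ m, ρ 0 m = 0 := fun m => (AddMonoidHom.mk' (ρ · m) (hadd · · m)).map_zero
  refine ⟨⟨a₀, fun h0 => hne (h0 ▸ hzero m₀)⟩, fun a b hab => or_iff_not_imp_right.2 fun hb => ?_⟩
  set N := ⨅ x, ((ρ' a).comp (ρ' x)).ker
  have hmemN : ∀ m, m ∈ N ↔ ∀ x, ρ a (ρ x m) = 0 := fun m => by
    simp [N, ρ', AddSubgroup.mem_iInf]
  have hN : N = ⊤ := by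
    refine (hsimple N fun c m hm => ?_).resolve_left fun hbot => hb (hfaith b fun m => ?_)
    · exact (hmemN _).2 fun x => by rw [← hmul x c]; exact (hmemN m).1 hm (x * c)
    · have : ρ b m ∈ N := (hmemN _).2 fun x => by
        rw [← hmul x b, ← hmul a, ← mul_assoc, hab, hzero]
      rwa [hbot, AddSubgroup.mem_bot] at this
  set S := ⋃ x, range (ρ x)
  have hS : AddSubgroup.closure S = ⊤ := by
    refine (hsimple _ fun c m hm => ?_).resolve_left fun hbot => hne ?_
    · have : ρ' c m ∈ (AddSubgroup.closure S).map (ρ' c) := AddSubgroup.mem_map_of_mem _ hm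
      rw [AddMonoidHom.map_closure] at this
      refine AddSubgroup.closure_mono ?_ this
      rintro _ ⟨_, ⟨_, ⟨x, rfl⟩, m', rfl⟩, rfl⟩
      exact mem_iUnion.2 ⟨c * x, m', hmul c x m'⟩
    · rw [← AddSubgroup.mem_bot, ← hbot]
      exact AddSubgroup.subset_closure (mem_iUnion.2 ⟨a₀, m₀, rfl⟩)
  have hker : AddSubgroup.closure S ≤ (ρ' a).ker := by
    rw [AddSubgroup.closure_le]
    rintro _ ⟨_, ⟨x, rfl⟩, m, rfl⟩
    exact (hmemN m).1 (hN ▸ AddSubgroup.mem_top m) x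
  exact hfaith a fun m => hker (hS ▸ AddSubgroup.mem_top m)

namespace EtaleGroupoid

variable {G : EtaleGroupoid.{u}}

section Algebraic

variable (G)

theorem d_mem_units (g : G.Arr) : G.d g ∈ G.units := ⟨g, rfl⟩

theorem r_mem_units (g : G.Arr) : G.r g ∈ G.units := ⟨G.inv g, G.d_inv g⟩

variable {G}

theorem d_of_mem_units {u : G.Arr} (hu : u ∈ G.units) : G.d u = u := by
  obtain ⟨g, rfl⟩ := hu
  exact G.d_d g

theorem r_of_mem_units {u : G.Arr} (hu : u ∈ G.units) : G.r u = u := by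
  obtain ⟨g, rfl⟩ := hu
  exact G.r_d g

theorem inv_of_mem_units {u : G.Arr} (hu : u ∈ G.units) : G.inv u = u := by
  calc G.inv u = G.comp (G.r (G.inv u)) (G.inv u) := (G.comp_unit_left _).symm
    _ = G.comp u (G.inv u) := by rw [G.r_inv, d_of_mem_units hu]
    _ = u := by rw [G.comp_inv, r_of_mem_units hu]

theorem comp_inv_comp_of_d_eq {g h : G.Arr} (hd : G.d h = G.d g) :
    G.comp (G.comp g (G.inv h)) h = g := by
  rw [G.comp_assoc _ _ _ (by rw [G.r_inv, hd]) (G.d_inv h), G.inv_comp, hd, G.comp_unit_right]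

theorem comp_comp_inv_of_d_eq_r {g h : G.Arr} (hgh : G.d g = G.r h) :
    G.comp (G.comp g h) (G.inv h) = g := by
  rw [G.comp_assoc _ _ _ hgh (G.r_inv h).symm, G.comp_inv, ← hgh, G.comp_unit_right]

theorem r_comp_inv_of_d_eq {g h : G.Arr} (hd : G.d h = G.d g) :
    G.r (G.comp g (G.inv h)) = G.r g :=
  G.r_comp _ _ (by rw [G.r_inv, hd])

theorem d_comp_inv_of_d_eq {g h : G.Arr} (hd : G.d h = G.d g) :
    G.d (G.comp g (G.inv h)) = G.r h := by
  rw [G.d_comp _ _ (by rw [G.r_inv, hd]), G.d_inv]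

theorem eq_of_inv_comp_mem_units {g h : G.Arr} (hr : G.r g = G.r h)
    (hu : G.comp (G.inv h) g ∈ G.units) : g = h := by
  have hcomp : G.d (G.inv h) = G.r g := by rw [G.d_inv, hr]
  have hdu : G.comp (G.inv h) g = G.d h := by
    rw [← r_of_mem_units hu, G.r_comp _ _ hcomp, G.r_inv]
  calc g = G.comp (G.comp h (G.inv h)) g := by rw [G.comp_inv, ← hr, G.comp_unit_left]
    _ = h := by rw [G.comp_assoc _ _ _ (G.r_inv h).symm hcomp, hdu, G.comp_unit_right]

theorem orbit_subset_units (x : G.Arr) : G.orbit x ⊆ G.units := by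
  rintro y ⟨g, -, rfl⟩
  exact G.r_mem_units g

theorem mem_orbit_self {x : G.Arr} (hx : x ∈ G.units) : x ∈ G.orbit x :=
  ⟨x, d_of_mem_units hx, r_of_mem_units hx⟩

theorem r_mem_orbit {x g : G.Arr} (h : G.d g ∈ G.orbit x) : G.r g ∈ G.orbit x := by
  obtain ⟨h, hd, hr⟩ := h
  exact ⟨G.comp g h, by rw [G.d_comp g h hr.symm, hd], G.r_comp g h hr.symm⟩

theorem exists_arrow_of_mem_orbit {x y z : G.Arr} (hy : y ∈ G.orbit x) (hz : z ∈ G.orbit x) :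
    ∃ g, G.d g = y ∧ G.r g = z := by
  obtain ⟨g₁, hd₁, rfl⟩ := hy
  obtain ⟨g₂, hd₂, rfl⟩ := hz
  have hc : G.d g₂ = G.r (G.inv g₁) := by rw [G.r_inv, hd₁, hd₂]
  exact ⟨G.comp g₂ (G.inv g₁), by rw [G.d_comp _ _ hc, G.d_inv], G.r_comp _ _ hc⟩

theorem bijOn_comp_inv (y : G.Arr) :
    BijOn (fun p : G.Arr × G.Arr => (G.comp p.1 (G.inv p.2), p.2))
      {p | p.1 ∈ G.r ⁻¹' {y} ∧ p.2 ∈ G.d ⁻¹' {G.d p.1}}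
      {q | q.1 ∈ G.r ⁻¹' {y} ∧ q.2 ∈ G.r ⁻¹' {G.d q.1}} := by
  refine ⟨fun p ⟨(hr : G.r p.1 = y), (hd : G.d p.2 = G.d p.1)⟩ => ?_, ?_, ?_⟩
  · exact ⟨(r_comp_inv_of_d_eq hd).trans hr, (d_comp_inv_of_d_eq hd).symm⟩
  · rintro ⟨g, v⟩ ⟨-, (hd : G.d v = G.d g)⟩ ⟨g', v'⟩ ⟨-, (hd' : G.d v' = G.d g')⟩ he
    obtain ⟨he₁, rfl : v = v'⟩ := Prod.mk.inj he
    rw [← comp_inv_comp_of_d_eq hd, he₁, comp_inv_comp_of_d_eq hd']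
  · rintro ⟨u, v⟩ ⟨(hr : G.r u = y), (hd : G.r v = G.d u)⟩
    refine ⟨(G.comp u v, v), ⟨?_, ?_⟩, ?_⟩
    · exact (G.r_comp u v hd.symm).trans hr
    · exact (G.d_comp u v hd.symm).symm
    · exact Prod.ext (comp_comp_inv_of_d_eq_r hd.symm) rfl

end Algebraic

section Topological

variable (G)

theorem isLocallyInjective_d : IsLocallyInjective G.d := fun g =>
  let ⟨U, hUo, hgU, hinj, _⟩ := G.etale g
  ⟨U, hUo, hgU, hinj⟩

theorem isOpenMap_d : IsOpenMap G.d := by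
  intro O hO
  rw [isOpen_iff_forall_mem_open]
  rintro x ⟨g, hg, rfl⟩
  obtain ⟨U, hUo, hgU, -, himg⟩ := G.etale g
  exact ⟨G.d '' (U ∩ O), image_mono inter_subset_right,
    himg _ inter_subset_left (hUo.inter hO), ⟨g, ⟨hgU, hg⟩, rfl⟩⟩

theorem inv_involutive : Involutive G.inv := G.inv_inv

theorem r_eq_d_comp_inv : G.r = G.d ∘ G.inv := funext fun g => (G.d_inv g).symm

theorem isLocallyInjective_r : IsLocallyInjective G.r := by
  rw [r_eq_d_comp_inv]
  exact G.isLocallyInjective_d.comp_right G.continuous_inv G.inv_involutive.injective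

theorem isOpenMap_r : IsOpenMap G.r := by
  rw [r_eq_d_comp_inv]
  refine G.isOpenMap_d.comp fun O hO => ?_
  rw [G.inv_involutive.image_eq_preimage_symm]
  exact hO.preimage G.continuous_inv

theorem isOpen_units_of_effective (heff : G.Effective) : IsOpen G.units := by
  rw [← heff]
  exact isOpen_interior

variable {G}

theorem unitsOpen_iff (hop : IsOpen G.units) {U : Set G.Arr} :
    G.UnitsOpen U ↔ U ⊆ G.units ∧ IsOpen U := by
  refine and_congr_right fun hU => ?_
  rw [hop.isOpenEmbedding_subtypeVal.isOpen_iff_preimage_isOpen (by rwa [Subtype.range_coe])]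

theorem unitsDense_iff {X : Set G.Arr} (hX : X ⊆ G.units) :
    G.UnitsDense X ↔ ∀ V : Set G.Arr, IsOpen V → (V ∩ G.units).Nonempty → (V ∩ X).Nonempty := by
  rw [UnitsDense, dense_iff_inter_open]
  constructor
  · rintro hd V hV ⟨v, hvV, hvu⟩
    obtain ⟨u, huV, huX⟩ := hd _ (hV.preimage continuous_subtype_val) ⟨⟨v, hvu⟩, hvV⟩
    exact ⟨u, huV, huX⟩
  · rintro h U hU ⟨u, hu⟩
    obtain ⟨V, hV, rfl⟩ := isOpen_induced_iff.1 hU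
    obtain ⟨w, hwV, hwX⟩ := h V hV ⟨u, hu, u.2⟩
    exact ⟨⟨w, hX hwX⟩, hwV, hwX⟩

end Topological

section Slices

theorem continuousOn_invFunOn_d [Nonempty G.Arr] {U : Set G.Arr} (hU : IsOpen U)
    (hinj : InjOn G.d U) : ContinuousOn (invFunOn G.d U) (G.d '' U) := by
  rw [continuousOn_iff']
  intro W hW
  refine ⟨G.d '' (W ∩ U), G.isOpenMap_d _ (hW.inter hU), ?_⟩
  ext z
  constructor
  · rintro ⟨hzW, g, hgU, rfl⟩
    rw [mem_preimage, hinj.leftInvOn_invFunOn hgU] at hzW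
    exact ⟨⟨g, ⟨hzW, hgU⟩, rfl⟩, g, hgU, rfl⟩
  · rintro ⟨⟨g, ⟨hgW, hgU⟩, rfl⟩, -⟩
    exact ⟨by rwa [mem_preimage, hinj.leftInvOn_invFunOn hgU], g, hgU, rfl⟩

theorem isOpen_image_of_d_comp_eqOn {V : Set G.Arr} (hV : IsOpen V) {σ : G.Arr → G.Arr}
    (hσ : ContinuousOn σ V) (hsec : ∀ z ∈ V, G.d (σ z) = z) : IsOpen (σ '' V) := by
  rw [isOpen_iff_forall_mem_open]
  rintro _ ⟨z, hz, rfl⟩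
  obtain ⟨U, hUo, hσU, hinj, -⟩ := G.etale (σ z)
  obtain ⟨u, huo, hzu, husub⟩ := continuousOn_iff.1 hσ z hz U hUo hσU
  refine ⟨U ∩ G.d ⁻¹' (u ∩ V), ?_, hUo.inter ((huo.inter hV).preimage G.continuous_d), hσU, ?_⟩
  · rintro b ⟨hbU, hbu, hbV⟩
    exact ⟨G.d b, hbV, hinj (husub ⟨hbu, hbV⟩) hbU (hsec _ hbV)⟩
  · rw [mem_preimage, hsec z hz]
    exact ⟨hzu, hz⟩

theorem exists_isCompact_isOpen_injOn_d (hop : IsOpen G.units) (hample : G.Ample) (g : G.Arr) :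
    ∃ B : Set G.Arr, g ∈ B ∧ IsCompact B ∧ IsOpen B ∧ InjOn G.d B := by
  have : Nonempty G.Arr := ⟨g⟩
  obtain ⟨U, hUo, hgU, hinj, -⟩ := G.etale g
  have hdU : G.UnitsOpen (G.d '' U) := (unitsOpen_iff hop).2
    ⟨image_subset_iff.2 fun h _ => G.d_mem_units h, G.isOpenMap_d U hUo⟩
  obtain ⟨K, hKU, hgK, hKc, hKo⟩ := hample.2 _ (G.d_mem_units g) _ hdU ⟨g, hgU, rfl⟩
  refine ⟨U ∩ G.d ⁻¹' K, ⟨hgU, hgK⟩, ?_, hUo.inter (((unitsOpen_iff hop).1 hKo).2.preimage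
    G.continuous_d), hinj.mono inter_subset_left⟩
  have hB : U ∩ G.d ⁻¹' K = invFunOn G.d U '' K := by
    rw [← hinj.invFunOn_image inter_subset_left, image_inter_preimage,
      inter_eq_self_of_subset_right hKU]
  rw [hB]
  exact hKc.image_of_continuousOn ((continuousOn_invFunOn_d hUo hinj).mono hKU)

theorem continuousOn_comp_of_composable {V : Set G.Arr} {f g : G.Arr → G.Arr}
    (hf : ContinuousOn f V) (hg : ContinuousOn g V) (hfg : ∀ z ∈ V, G.d (f z) = G.r (g z)) :
    ContinuousOn (fun z => G.comp (f z) (g z)) V := by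
  rw [continuousOn_iff_continuous_domRestrict] at hf hg ⊢
  exact G.continuous_comp.comp ((hf.prodMk hg).subtype_mk fun z => hfg z z.2)

end Slices

section Effective

theorem mapsTo_units_of_continuousOn_section (heff : G.Effective) {W : Set G.Arr}
    (hW : IsOpen W) {σ : G.Arr → G.Arr} (hσ : ContinuousOn σ W) (hd : ∀ z ∈ W, G.d (σ z) = z)
    (hr : ∀ z ∈ W, G.r (σ z) = z) : MapsTo σ W G.units := by
  rw [mapsTo_iff_image_subset, ← heff]
  refine interior_maximal ?_ (isOpen_image_of_d_comp_eqOn hW hσ hd)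
  rintro _ ⟨z, hz, rfl⟩
  exact (hd z hz).trans (hr z hz).symm

variable (G) in
def parallelLocus (U V : Set G.Arr) : Set G.Arr :=
  {z | ∃ g ∈ U, ∃ h ∈ V, g ≠ h ∧ G.d g = z ∧ G.d h = z ∧ G.r g = G.r h}

/-- Over the interior of the parallel locus, `z ↦ h_z⁻¹ g_z` is a continuous section of `d` through
the isotropy, hence takes values in the units, which forces `g_z = h_z`. -/
theorem interior_parallelLocus_eq_empty (heff : G.Effective) {U V : Set G.Arr} (hU : IsOpen U)
    (hUd : InjOn G.d U) (hV : IsOpen V) (hVd : InjOn G.d V) :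
    interior (G.parallelLocus U V) = ∅ := by
  refine eq_empty_iff_forall_notMem.2 fun z₀ hz₀ => ?_
  set W := interior (G.parallelLocus U V)
  have : Nonempty G.Arr := ⟨z₀⟩
  set s₁ := invFunOn G.d U
  set s₂ := invFunOn G.d V
  have hpair : ∀ z ∈ W, s₁ z ∈ U ∧ s₂ z ∈ V ∧ s₁ z ≠ s₂ z ∧ G.d (s₁ z) = z ∧
      G.d (s₂ z) = z ∧ G.r (s₁ z) = G.r (s₂ z) := by
    intro z hz
    obtain ⟨g, hg, h, hh, hne, rfl, hdh, hr⟩ := interior_subset hz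
    have e₁ : s₁ (G.d g) = g := hUd.leftInvOn_invFunOn hg
    have e₂ : s₂ (G.d g) = h := by rw [← hdh]; exact hVd.leftInvOn_invFunOn hh
    rw [e₁, e₂]
    exact ⟨hg, hh, hne, rfl, hdh, hr⟩
  set σ := fun z => G.comp (G.inv (s₂ z)) (s₁ z)
  have hcomposable : ∀ z ∈ W, G.d (G.inv (s₂ z)) = G.r (s₁ z) := fun z hz => by
    obtain ⟨-, -, -, -, -, hr⟩ := hpair z hz
    rw [G.d_inv, hr]
  have hσd : ∀ z ∈ W, G.d (σ z) = z := fun z hz => by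
    obtain ⟨-, -, -, hd₁, -, -⟩ := hpair z hz
    rw [G.d_comp _ _ (hcomposable z hz), hd₁]
  have hσr : ∀ z ∈ W, G.r (σ z) = z := fun z hz => by
    obtain ⟨-, -, -, -, hd₂, -⟩ := hpair z hz
    rw [G.r_comp _ _ (hcomposable z hz), G.r_inv, hd₂]
  have hσ : ContinuousOn σ W := by
    have hWU : W ⊆ G.d '' U := fun z hz =>
      let ⟨h₁, _, _, hd₁, _, _⟩ := hpair z hz
      ⟨_, h₁, hd₁⟩
    have hWV : W ⊆ G.d '' V := fun z hz =>
      let ⟨_, h₂, _, _, hd₂, _⟩ := hpair z hz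
      ⟨_, h₂, hd₂⟩
    exact continuousOn_comp_of_composable
      (G.continuous_inv.comp_continuousOn ((continuousOn_invFunOn_d hV hVd).mono hWV))
      ((continuousOn_invFunOn_d hU hUd).mono hWU) hcomposable
  obtain ⟨-, -, hne, -, -, hr⟩ := hpair z₀ hz₀
  exact hne (eq_of_inv_comp_mem_units hr
    (mapsTo_units_of_continuousOn_section heff isOpen_interior hσ hσd hσr hz₀))

theorem isNowhereDense_parallelLocus [T2Space G.Arr] (heff : G.Effective) (hample : G.Ample)
    {S : Set G.Arr} (hS : IsCompact S) : IsNowhereDense (G.parallelLocus S S) := by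
  have hop := G.isOpen_units_of_effective heff
  choose B hgB hBc hBo hBd using exists_isCompact_isOpen_injOn_d hop hample
  obtain ⟨t, hSt⟩ := hS.elim_finite_subcover B hBo fun g _ => mem_iUnion.2 ⟨g, hgB g⟩
  set D : G.Arr × G.Arr → Set G.Arr := fun p => (G.d ∘ Prod.fst) ''
    ((B p.1 \ B p.2) ×ˢ B p.2 ∩ {q | G.d q.1 = G.d q.2 ∧ G.r q.1 = G.r q.2})
  have hD : ∀ p ∈ t ×ˢ t, IsNowhereDense (D p) := by
    intro p _
    have hpar : IsClosed {q : G.Arr × G.Arr | G.d q.1 = G.d q.2 ∧ G.r q.1 = G.r q.2} :=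
      (isClosed_eq (G.continuous_d.comp continuous_fst) (G.continuous_d.comp continuous_snd)).inter
        (isClosed_eq (G.continuous_r.comp continuous_fst) (G.continuous_r.comp continuous_snd))
    have hclosed : IsClosed (D p) :=
      ((((hBc _).diff (hBo _)).prod (hBc _)).inter_right hpar).image
        (G.continuous_d.comp continuous_fst) |>.isClosed
    rw [hclosed.isNowhereDense_iff, ← subset_empty_iff,
      ← interior_parallelLocus_eq_empty heff (hBo p.1) (hBd p.1) (hBo p.2) (hBd p.2)]
    refine interior_mono ?_
    rintro _ ⟨⟨g, h⟩, ⟨⟨⟨hg, hgh⟩, hh⟩, hd, hr⟩, rfl⟩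
    exact ⟨g, hg, h, hh, fun e => hgh (e ▸ hh), rfl, hd.symm, hr⟩
  refine (isNowhereDense_biUnion (t ×ˢ t) hD).mono ?_
  rintro z ⟨g, hg, h, hh, hne, rfl, hd, hr⟩
  obtain ⟨i, hi, hgi⟩ := mem_iUnion₂.1 (hSt hg)
  obtain ⟨j, hj, hhj⟩ := mem_iUnion₂.1 (hSt hh)
  have hgj : g ∉ B j := fun hgj => hne (hBd j hgj hhj hd.symm)
  exact mem_iUnion₂.2 ⟨(i, j), Finset.mem_product.2 ⟨hi, hj⟩,
    ⟨(g, h), ⟨⟨⟨hgi, hgj⟩, hhj⟩, hd.symm, hr⟩, rfl⟩⟩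

end Effective

section DenseOrbit

theorem weaklyLocallyCompactSpace_units (hample : G.Ample) : WeaklyLocallyCompactSpace G.units where
  exists_compact_mem_nhds x := by
    obtain ⟨K, hKu, hxK, hKc, hKo⟩ :=
      hample.2 x x.2 G.units ⟨subset_rfl, by simp⟩ x.2
    refine ⟨Subtype.val ⁻¹' K, ?_, hKo.2.mem_nhds hxK⟩
    rwa [Topology.IsEmbedding.subtypeVal.isCompact_iff, Subtype.image_preimage_coe,
      inter_eq_self_of_subset_right hKu]

theorem invariant_r_image_d_preimage (O : Set G.Arr) : G.Invariant (G.r '' (G.d ⁻¹' O)) := by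
  rintro g ⟨h, hh, hrh⟩
  exact ⟨G.comp g h, by rwa [mem_preimage, G.d_comp g h hrh.symm], G.r_comp g h hrh.symm⟩

/-- By Baire, a unit lying in the saturation of every basic open set of the unit space has a
dense orbit. -/
theorem exists_unitsDense_orbit [SecondCountableTopology G.units] (hample : G.Ample)
    (htrans : G.TopTransitive) (hne : G.units.Nonempty) :
    ∃ x ∈ G.units, G.UnitsDense (G.orbit x) := by
  have := hample.1
  have := weaklyLocallyCompactSpace_units hample
  have : Nonempty G.units := hne.to_subtype
  obtain ⟨b, hbc, hb0, hb⟩ := TopologicalSpace.exists_countable_basis G.units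
  have : Countable b := hbc.to_subtype
  choose O hO hOb using fun β : b => isOpen_induced_iff.1 (hb.isOpen β.2)
  set W : b → Set G.Arr := fun β => G.r '' (G.d ⁻¹' O β)
  have hWo : ∀ β, G.UnitsOpen (W β) := fun β =>
    ⟨image_subset_range _ _ |>.trans fun _ ⟨g, hg⟩ => hg ▸ G.r_mem_units g,
      (G.isOpenMap_r _ ((hO β).preimage G.continuous_d)).preimage continuous_subtype_val⟩
  have hWd : ∀ β, Dense (Subtype.val ⁻¹' W β : Set G.units) := by
    intro β
    refine htrans _ (hWo β) (invariant_r_image_d_preimage _) ?_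
    obtain ⟨u, hu⟩ := nonempty_iff_ne_empty.2 fun h => hb0 (h ▸ β.2)
    rw [← hOb β] at hu
    exact ⟨u, u, by rwa [mem_preimage, d_of_mem_units u.2], r_of_mem_units u.2⟩
  obtain ⟨x, hx⟩ := (dense_iInter_of_isOpen (fun β => (hWo β).2) hWd).nonempty
  refine ⟨x, x.2, hb.dense_iff.2 fun o ho _ => ?_⟩
  obtain ⟨g, hg, hgx⟩ := mem_iInter.1 hx ⟨o, ho⟩
  refine ⟨⟨G.d g, G.d_mem_units g⟩, ?_, G.inv g, G.d_inv g ▸ hgx, G.r_inv g⟩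
  exact (hOb ⟨o, ho⟩).subset hg

end DenseOrbit

section ConvolutionAlgebra

variable {k : Type} [CommRing k]

theorem indicator_mem_algebraSet {U : Set G.Arr} (hUc : IsCompact U) (hUo : IsOpen U) :
    (U.indicator fun _ => (1 : k)) ∈ G.AlgebraSet k :=
  Submodule.subset_span ⟨U, hUc, hUo, rfl⟩

theorem isLocallyConstant_and_hasCompactSupport_of_mem_algebraSet [T2Space G.Arr]
    {f : G.Arr → k} (hf : f ∈ G.AlgebraSet k) : IsLocallyConstant f ∧ HasCompactSupport f := by
  induction hf using Submodule.span_induction with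
  | mem f hf =>
    obtain ⟨U, hUc, hUo, rfl⟩ := hf
    exact ⟨(LocallyConstant.charFn k ⟨hUc.isClosed, hUo⟩).isLocallyConstant,
      HasCompactSupport.intro hUc fun x hx => indicator_of_notMem hx _⟩
  | zero => exact ⟨IsLocallyConstant.const 0, HasCompactSupport.zero⟩
  | add f g _ _ hf hg => exact ⟨hf.1.add hg.1, hf.2.add hg.2⟩
  | smul c f _ hf => exact ⟨hf.1.comp (c • ·), hf.2.smul_left⟩

theorem isClopen_support_of_mem_algebraSet [T2Space G.Arr] {f : G.Arr → k}
    (hf : f ∈ G.AlgebraSet k) : IsClopen (support f) :=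
  ((isLocallyConstant_and_hasCompactSupport_of_mem_algebraSet hf).1.isClopen_fiber 0).compl

theorem isCompact_support_of_mem_algebraSet [T2Space G.Arr] {f : G.Arr → k}
    (hf : f ∈ G.AlgebraSet k) : IsCompact (support f) := by
  have hcs := (isLocallyConstant_and_hasCompactSupport_of_mem_algebraSet hf).2
  rwa [HasCompactSupport, tsupport, (isClopen_support_of_mem_algebraSet hf).isClosed.closure_eq]
    at hcs

theorem conv_apply (f f' : G.Arr → k) (x : G.Arr) :
    G.conv f f' x = ∑ᶠ h ∈ G.d ⁻¹' {G.d x}, f (G.comp x (G.inv h)) * f' h :=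
  rfl

theorem conv_indicator_right (f : G.Arr → k) {K : Set G.Arr} (hK : K ⊆ G.units) :
    G.conv f (K.indicator fun _ => 1) = (G.d ⁻¹' K).indicator f := by
  funext x
  rw [conv_apply, finsum_mem_eq_single_of_mem (s := G.d ⁻¹' {G.d x}) (G.d_d x),
    inv_of_mem_units (G.d_mem_units x), G.comp_unit_right]
  · by_cases hx : G.d x ∈ K <;> simp [hx]
  · intro h hh hne
    have hhK : h ∉ K := fun hhK => hne ((d_of_mem_units (hK hhK)).symm.trans hh)
    simp [hhK]

theorem conv_indicator_left (f : G.Arr → k) {L : Set G.Arr} (hL : L ⊆ G.units) :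
    G.conv (L.indicator fun _ => 1) f = (G.r ⁻¹' L).indicator f := by
  funext x
  rw [conv_apply, finsum_mem_eq_single_of_mem (s := G.d ⁻¹' {G.d x}) (a := x) rfl, G.comp_inv]
  · by_cases hx : G.r x ∈ L <;> simp [hx]
  · intro h hh hne
    suffices G.comp x (G.inv h) ∉ L by simp [this]
    intro hxh
    apply hne
    have hunit : G.comp x (G.inv h) = G.r h := by
      rw [← d_of_mem_units (hL hxh), d_comp_inv_of_d_eq hh]
    rw [← comp_inv_comp_of_d_eq hh, hunit, G.comp_unit_left]

theorem topTransitive_of_algPrime [Nontrivial k] (hop : IsOpen G.units) (hample : G.Ample)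
    (hprime : G.AlgPrime k) : G.TopTransitive := by
  rintro U hU hUinv ⟨x, hxU⟩
  rw [unitsDense_iff hU.1]
  rintro V hV ⟨v, hvV, hvu⟩
  by_contra hVU
  obtain ⟨K, hKU, hxK, hKc, hKo⟩ := hample.2 x (hU.1 hxU) U hU hxU
  obtain ⟨L, hLV, hvL, hLc, hLo⟩ := hample.2 v hvu (V ∩ G.units)
    ((unitsOpen_iff hop).2 ⟨inter_subset_right, hV.inter hop⟩) ⟨hvV, hvu⟩
  rw [unitsOpen_iff hop] at hKo hLo
  have hzero : ∀ f ∈ G.AlgebraSet k,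
      G.conv (G.conv (L.indicator fun _ => 1) f) (K.indicator fun _ => 1) = 0 := by
    intro f _
    rw [conv_indicator_right _ hKo.1, conv_indicator_left _ hLo.1]
    funext w
    by_cases hw : G.d w ∈ K
    · have hwL : G.r w ∉ L := fun hwL => hVU ⟨G.r w, (hLV hwL).1, hUinv w (hKU hw)⟩
      simp [hw, hwL]
    · simp [hw]
  rcases hprime.2 _ (indicator_mem_algebraSet hLc hLo.2) _ (indicator_mem_algebraSet hKc hKo.2)
    hzero with h | h
  · simpa [hvL] using congrFun h v
  · simpa [hxK] using congrFun h x

end ConvolutionAlgebra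

section Action

variable {k : Type} [CommRing k]

variable (G) in
noncomputable def act (f m : G.Arr → k) : G.Arr → k :=
  fun y => ∑ᶠ g ∈ G.r ⁻¹' {y}, f g * m (G.d g)

variable (k) in
def orbitModule (x : G.Arr) : AddSubgroup (G.Arr → k) where
  carrier := {m | support m ⊆ G.orbit x ∧ (support m).Finite}
  add_mem' hm hm' := ⟨(support_add _ _).trans (union_subset hm.1 hm'.1),
    (hm.2.union hm'.2).subset (support_add _ _)⟩
  zero_mem' := by simp
  neg_mem' hm := by simpa only [mem_ofPred_eq, support_neg] using hm

theorem single_mem_orbitModule [DecidableEq G.Arr] {x z : G.Arr} (hz : z ∈ G.orbit x) (c : k) :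
    Pi.single z c ∈ orbitModule k x :=
  ⟨Pi.support_single_subset.trans (singleton_subset_iff.2 hz),
    (finite_singleton z).subset Pi.support_single_subset⟩

theorem act_indicator {K : Set G.Arr} (hK : K ⊆ G.units) (m : G.Arr → k) :
    G.act (K.indicator fun _ => 1) m = K.indicator m := by
  funext y
  by_cases hy : y ∈ K
  · rw [act, finsum_mem_eq_single_of_mem (s := G.r ⁻¹' {y}) (r_of_mem_units (hK hy)),
      indicator_of_mem hy, indicator_of_mem hy, one_mul, d_of_mem_units (hK hy)]
    intro g hg hne
    have hgK : g ∉ K := fun hgK => hne ((r_of_mem_units (hK hgK)).symm.trans hg)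
    rw [indicator_of_notMem hgK, zero_mul]
  · rw [act, indicator_of_notMem hy]
    refine finsum_mem_of_eqOn_zero fun g (hg : G.r g = y) => ?_
    have hgK : g ∉ K := fun hgK => hy (hg ▸ (r_of_mem_units (hK hgK)).symm ▸ hgK)
    rw [indicator_of_notMem hgK, zero_mul, Pi.zero_apply]

theorem act_single_apply_of_forall_eq [DecidableEq G.Arr] {f : G.Arr → k} {g : G.Arr}
    (huniq : ∀ h, G.r h = G.r g → G.d h = G.d g → f h ≠ 0 → h = g) (c : k) :
    G.act f (Pi.single (G.d g) c) (G.r g) = f g * c := by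
  rw [act, finsum_mem_eq_single_of_mem (s := G.r ⁻¹' {G.r g}) rfl, Pi.single_eq_same]
  intro h (hh : G.r h = G.r g) hne
  by_cases hd : G.d h = G.d g
  · rw [not_not.1 fun hf => hne (huniq h hh hd hf), zero_mul]
  · rw [Pi.single_eq_of_ne hd, mul_zero]

variable [T2Space G.Arr]

theorem finite_inter_r_preimage_support {f : G.Arr → k} (hf : f ∈ G.AlgebraSet k) (y : G.Arr) :
    (G.r ⁻¹' {y} ∩ support f).Finite := by
  rw [inter_comm]
  exact G.isLocallyInjective_r.finite_inter_preimage (isCompact_support_of_mem_algebraSet hf)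
    (finite_singleton y)

theorem act_add_left {f₁ f₂ : G.Arr → k} (hf₁ : f₁ ∈ G.AlgebraSet k)
    (hf₂ : f₂ ∈ G.AlgebraSet k) (m : G.Arr → k) :
    G.act (f₁ + f₂) m = G.act f₁ m + G.act f₂ m := by
  funext y
  simp only [act, Pi.add_apply, add_mul]
  exact finsum_mem_add_distrib'
    ((finite_inter_r_preimage_support hf₁ y).subset
      (inter_subset_inter_right _ (support_mul_subset_left _ _)))
    ((finite_inter_r_preimage_support hf₂ y).subset
      (inter_subset_inter_right _ (support_mul_subset_left _ _)))

theorem act_add_right {f : G.Arr → k} (hf : f ∈ G.AlgebraSet k) (m m' : G.Arr → k) :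
    G.act f (m + m') = G.act f m + G.act f m' := by
  funext y
  simp only [act, Pi.add_apply, mul_add]
  have hfin := finite_inter_r_preimage_support hf y
  exact finsum_mem_add_distrib'
    (hfin.subset (inter_subset_inter_right _ (support_mul_subset_left _ _)))
    (hfin.subset (inter_subset_inter_right _ (support_mul_subset_left _ _)))

theorem act_mem_orbitModule {f m : G.Arr → k} (hf : f ∈ G.AlgebraSet k) {x : G.Arr}
    (hm : m ∈ orbitModule k x) : G.act f m ∈ orbitModule k x := by
  have key : ∀ y ∈ support (G.act f m),
      ∃ g ∈ support f ∩ G.d ⁻¹' support m, G.r g = y := by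
    intro y hy
    obtain ⟨g, hg, hne⟩ := exists_ne_zero_of_finsum_mem_ne_zero hy
    exact ⟨g, ⟨left_ne_zero_of_mul hne, right_ne_zero_of_mul hne⟩, hg⟩
  refine ⟨fun y hy => ?_, ?_⟩
  · obtain ⟨g, ⟨-, hgm⟩, rfl⟩ := key y hy
    exact r_mem_orbit (hm.1 hgm)
  · refine ((G.isLocallyInjective_d.finite_inter_preimage
      (isCompact_support_of_mem_algebraSet hf) hm.2).image G.r).subset fun y hy => ?_
    obtain ⟨g, hg, rfl⟩ := key y hy
    exact mem_image_of_mem _ hg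

theorem act_conv [NoZeroDivisors k] {f f' m : G.Arr → k} (hf : f ∈ G.AlgebraSet k)
    (hf' : f' ∈ G.AlgebraSet k) (hm : (support m).Finite) :
    G.act (G.conv f f') m = G.act f (G.act f' m) := by
  funext y
  set e := fun p : G.Arr × G.Arr => (G.comp p.1 (G.inv p.2), p.2)
  set F : G.Arr × G.Arr → k := fun q => f q.1 * (f' q.2 * m (G.d q.2))
  set P := {p : G.Arr × G.Arr | p.1 ∈ G.r ⁻¹' {y} ∧ p.2 ∈ G.d ⁻¹' {G.d p.1}}
  set Q := {q : G.Arr × G.Arr | q.1 ∈ G.r ⁻¹' {y} ∧ q.2 ∈ G.r ⁻¹' {G.d q.1}}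
  have hFe : ∀ p ∈ P, f (G.comp p.1 (G.inv p.2)) * f' p.2 * m (G.d p.1) = F (e p) := by
    rintro p ⟨-, (hd : G.d p.2 = G.d p.1)⟩
    simp only [F, e, hd, mul_assoc]
  have hQfin : (Q ∩ support F).Finite := by
    refine ((finite_inter_r_preimage_support hf y).prod
      (G.isLocallyInjective_d.finite_inter_preimage (isCompact_support_of_mem_algebraSet hf')
        hm)).subset ?_
    rintro ⟨u, v⟩ ⟨⟨hu, -⟩, hne⟩
    exact ⟨⟨hu, left_ne_zero_of_mul hne⟩, left_ne_zero_of_mul (right_ne_zero_of_mul hne),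
      right_ne_zero_of_mul (right_ne_zero_of_mul hne)⟩
  have hPfin : (P ∩ support fun p => f (G.comp p.1 (G.inv p.2)) * f' p.2 * m (G.d p.1)).Finite := by
    refine Finite.of_finite_image (hQfin.subset ?_)
      ((bijOn_comp_inv y).injOn.mono inter_subset_left)
    rintro _ ⟨p, ⟨hp, hne⟩, rfl⟩
    exact ⟨(bijOn_comp_inv y).mapsTo hp, by rwa [mem_support, ← hFe p hp]⟩
  calc G.act (G.conv f f') m y
      = ∑ᶠ g ∈ G.r ⁻¹' {y}, ∑ᶠ v ∈ G.d ⁻¹' {G.d g},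
          f (G.comp g (G.inv v)) * f' v * m (G.d g) := by
        simp only [act, conv_apply, finsum_mem_mul]
    _ = ∑ᶠ p ∈ P, f (G.comp p.1 (G.inv p.2)) * f' p.2 * m (G.d p.1) :=
        finsum_mem_finsum_mem_eq_finsum_mem_prod hPfin
    _ = ∑ᶠ q ∈ Q, F q := finsum_mem_eq_of_bijOn e (bijOn_comp_inv y) hFe
    _ = ∑ᶠ u ∈ G.r ⁻¹' {y}, ∑ᶠ v ∈ G.r ⁻¹' {G.d u}, f u * (f' v * m (G.d v)) :=
        (finsum_mem_finsum_mem_eq_finsum_mem_prod (s := G.r ⁻¹' {y})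
          (t := fun u => G.r ⁻¹' {G.d u}) (f := fun u v => f u * (f' v * m (G.d v))) hQfin).symm
    _ = G.act f (G.act f' m) y := by
        simp only [act, mul_finsum_mem]

theorem eq_zero_of_forall_act_single_eq_zero [DecidableEq G.Arr]
    (heff : G.Effective) (hample : G.Ample) {x : G.Arr} (hx : G.UnitsDense (G.orbit x))
    {f : G.Arr → k} (hf : f ∈ G.AlgebraSet k)
    (hact : ∀ z ∈ G.orbit x, G.act f (Pi.single z 1) = 0) : f = 0 := by
  by_contra hf0
  set S := support f
  have hE := isNowhereDense_parallelLocus heff hample (isCompact_support_of_mem_algebraSet hf)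
  have hdS : IsOpen (G.d '' S) := G.isOpenMap_d _ (isClopen_support_of_mem_algebraSet hf).isOpen
  obtain ⟨g, hg⟩ := support_nonempty_iff.2 hf0
  have hW : ((G.d '' S \ closure (G.parallelLocus S S)) ∩ G.units).Nonempty := by
    have hdSE : ¬G.d '' S ⊆ closure (G.parallelLocus S S) := fun hsub =>
      (interior_maximal hsub hdS).trans_eq hE ⟨g, hg, rfl⟩
    obtain ⟨_, ⟨g', hg', rfl⟩, hE'⟩ := not_subset.1 hdSE
    exact ⟨G.d g', ⟨⟨g', hg', rfl⟩, hE'⟩, G.d_mem_units g'⟩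
  obtain ⟨z, ⟨⟨g₀, hg₀, rfl⟩, hzE⟩, hzx⟩ := (unitsDense_iff (orbit_subset_units x)).1 hx _
    (hdS.sdiff isClosed_closure) hW
  refine hg₀ ?_
  rw [← mul_one (f g₀), ← act_single_apply_of_forall_eq, hact _ hzx, Pi.zero_apply]
  intro h hr hd hh
  by_contra hne
  exact hzE (subset_closure ⟨h, hh, g₀, hg₀, hne, hd, rfl, hr⟩)

end Action

section Simple

variable {k : Type} [Field k] [DecidableEq G.Arr]

theorem act_indicator_single_of_injOn {B : Set G.Arr} (hB : InjOn G.d B) {g : G.Arr}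
    (hg : g ∈ B) (a c : k) :
    G.act (B.indicator fun _ => a) (Pi.single (G.d g) c) = Pi.single (G.r g) (a * c) := by
  funext z
  by_cases hz : z = G.r g
  · subst hz
    rw [act_single_apply_of_forall_eq, indicator_of_mem hg, Pi.single_eq_same]
    exact fun h _ hd hne => hB (mem_of_indicator_ne_zero hne) hg hd
  · rw [Pi.single_eq_of_ne hz]
    refine finsum_mem_of_eqOn_zero fun h (hh : G.r h = z) => ?_
    by_cases hd : G.d h = G.d g
    · have hhB : h ∉ B := fun hhB => hz (hh ▸ congrArg G.r (hB hhB hg hd))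
      rw [indicator_of_notMem hhB, zero_mul, Pi.zero_apply]
    · rw [Pi.single_eq_of_ne hd, mul_zero, Pi.zero_apply]

variable {N : AddSubgroup (G.Arr → k)}

theorem single_mem_of_single_mem (hop : IsOpen G.units) (hample : G.Ample)
    (hN : ∀ f ∈ G.AlgebraSet k, ∀ m ∈ N, G.act f m ∈ N) {g : G.Arr} {c : k} (hc : c ≠ 0)
    (hg : Pi.single (G.d g) c ∈ N) (c' : k) : Pi.single (G.r g) c' ∈ N := by
  obtain ⟨B, hgB, hBc, hBo, hBd⟩ := exists_isCompact_isOpen_injOn_d hop hample g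
  have hmem : (B.indicator fun _ => c' / c) ∈ G.AlgebraSet k := by
    have hscale : (B.indicator fun _ => c' / c) = (c' / c) • B.indicator fun _ => (1 : k) := by
      funext h
      by_cases hh : h ∈ B <;> simp [hh]
    rw [hscale]
    exact Submodule.smul_mem _ _ (indicator_mem_algebraSet hBc hBo)
  have := hN _ hmem _ hg
  rwa [act_indicator_single_of_injOn hBd hgB, div_mul_cancel₀ c' hc] at this

variable [T2Space G.Arr]

theorem single_mem_of_act_mem (hop : IsOpen G.units) (hample : G.Ample)
    (hN : ∀ f ∈ G.AlgebraSet k, ∀ m ∈ N, G.act f m ∈ N) {m : G.Arr → k} (hmN : m ∈ N)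
    (hm : (support m).Finite) {y : G.Arr} (hy : y ∈ G.units) : Pi.single y (m y) ∈ N := by
  have hU : G.UnitsOpen (G.units \ (support m \ {y})) :=
    (unitsOpen_iff hop).2 ⟨sdiff_subset, hop.sdiff hm.sdiff.isClosed⟩
  obtain ⟨K, hKU, hyK, hKc, hKo⟩ := hample.2 y hy _ hU ⟨hy, fun h => h.2 rfl⟩
  have hKunits := ((unitsOpen_iff hop).1 hKo).1
  have hcut : G.act (K.indicator fun _ => 1) m = Pi.single y (m y) := by
    rw [act_indicator hKunits]
    funext z
    by_cases hz : z = y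
    · rw [hz, indicator_of_mem hyK, Pi.single_eq_same]
    · rw [Pi.single_eq_of_ne hz]
      by_cases hzK : z ∈ K
      · rw [indicator_of_mem hzK]
        exact not_not.1 fun hne => (hKU hzK).2 ⟨hne, hz⟩
      · exact indicator_of_notMem hzK _
  exact hcut ▸ hN _ (indicator_mem_algebraSet hKc ((unitsOpen_iff hop).1 hKo).2) m hmN

theorem orbitModule_le_of_act_mem (hop : IsOpen G.units) (hample : G.Ample)
    (hN : ∀ f ∈ G.AlgebraSet k, ∀ m ∈ N, G.act f m ∈ N) {x : G.Arr} {m : G.Arr → k}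
    (hmN : m ∈ N) (hm : m ∈ orbitModule k x) (hm0 : m ≠ 0) : orbitModule k x ≤ N := by
  obtain ⟨y, hy⟩ := Function.ne_iff.1 hm0
  have hyx : y ∈ G.orbit x := hm.1 hy
  have hsingle_y := single_mem_of_act_mem hop hample hN hmN hm.2 (orbit_subset_units x hyx)
  have hsingle : ∀ z ∈ G.orbit x, ∀ c : k, Pi.single z c ∈ N := by
    intro z hz c
    obtain ⟨g, rfl, rfl⟩ := exists_arrow_of_mem_orbit hyx hz
    exact single_mem_of_single_mem hop hample hN hy hsingle_y c
  intro m' hm'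
  rw [← sum_pi_single_eq_of_support_subset m' hm'.2.coe_toFinset.symm.subset]
  exact sum_mem fun z hz => hsingle z (hm'.1 (hm'.2.mem_toFinset.1 hz)) _

end Simple

section Realization

variable {k : Type} [CommRing k]

variable (G) in
structure IsConvolutionAlgebra {A : Type*} [Add A] [Mul A] (φ : A → G.Arr → k) : Prop where
  map_add : ∀ a b, φ (a + b) = φ a + φ b
  map_mul : ∀ a b, φ (a * b) = G.conv (φ a) (φ b)
  injective : Injective φ
  range_eq : range φ = G.AlgebraSet k

namespace IsConvolutionAlgebra

variable {A : Type*} [NonUnitalRing A] {φ : A → G.Arr → k}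

theorem map_zero (hφ : G.IsConvolutionAlgebra φ) : φ 0 = 0 :=
  (AddMonoidHom.mk' φ hφ.map_add).map_zero

theorem mem_algebraSet (hφ : G.IsConvolutionAlgebra φ) (a : A) : φ a ∈ G.AlgebraSet k :=
  hφ.range_eq ▸ mem_range_self a

theorem exists_eq (hφ : G.IsConvolutionAlgebra φ) {f : G.Arr → k} (hf : f ∈ G.AlgebraSet k) :
    ∃ a, φ a = f := by
  rwa [← hφ.range_eq] at hf

theorem algPrime (hφ : G.IsConvolutionAlgebra φ) (h : IsPrimeRingE A) : G.AlgPrime k := by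
  obtain ⟨⟨a, ha⟩, hprime⟩ := h
  refine ⟨⟨φ a, hφ.mem_algebraSet a, fun h0 => ha (hφ.injective (h0.trans hφ.map_zero.symm))⟩, ?_⟩
  intro f hf f' hf' hzero
  obtain ⟨a, rfl⟩ := hφ.exists_eq hf
  obtain ⟨b, rfl⟩ := hφ.exists_eq hf'
  refine (hprime a b fun x => hφ.injective ?_).imp (fun h : a = 0 => h ▸ hφ.map_zero)
    (fun h : b = 0 => h ▸ hφ.map_zero)
  rw [hφ.map_zero, hφ.map_mul, hφ.map_mul, hzero _ (hφ.mem_algebraSet x)]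

end IsConvolutionAlgebra

end Realization

theorem IsConvolutionAlgebra.isPrimitiveRingE {k : Type} [Field k] [T2Space G.Arr]
    {A : Type u} [NonUnitalRing A] {φ : A → G.Arr → k} (hφ : G.IsConvolutionAlgebra φ)
    (heff : G.Effective) (hample : G.Ample) {x : G.Arr} (hx : x ∈ G.units)
    (hdense : G.UnitsDense (G.orbit x)) : IsPrimitiveRingE A := by
  classical
  have hop := G.isOpen_units_of_effective heff
  set M := orbitModule k x
  let ρ : A → M → M := fun a m => ⟨G.act (φ a) m, act_mem_orbitModule (hφ.mem_algebraSet a) m.2⟩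
  refine ⟨M, inferInstance, ρ, fun a b m => ?_, fun a m m' => ?_, fun a b m => ?_, ?_, ?_, ?_⟩
  · exact Subtype.ext <| (congrArg (G.act · m) (hφ.map_add a b)).trans
      (act_add_left (hφ.mem_algebraSet a) (hφ.mem_algebraSet b) m)
  · exact Subtype.ext (act_add_right (hφ.mem_algebraSet a) m m')
  · exact Subtype.ext <| (congrArg (G.act · m) (hφ.map_mul a b)).trans
      (act_conv (hφ.mem_algebraSet a) (hφ.mem_algebraSet b) m.2.2)
  · obtain ⟨K, -, hxK, hKc, hKo⟩ :=
      hample.2 x hx G.units ((unitsOpen_iff hop).2 ⟨subset_rfl, hop⟩) hx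
    rw [unitsOpen_iff hop] at hKo
    obtain ⟨a, ha⟩ := hφ.exists_eq (indicator_mem_algebraSet (k := k) hKc hKo.2)
    refine ⟨a, ⟨_, single_mem_orbitModule (mem_orbit_self hx) 1⟩, fun h0 => ?_⟩
    have := congrFun (congrArg Subtype.val h0) x
    simp [ρ, ha, act_indicator hKo.1, hxK] at this
  · intro N hN
    refine or_iff_not_imp_left.2 fun hbot => ?_
    obtain ⟨⟨m, hmN⟩, hm0⟩ := (AddSubgroup.ne_bot_iff_exists_ne_zero).1 hbot
    have hN' : ∀ f ∈ G.AlgebraSet k, ∀ m ∈ N.map M.subtype, G.act f m ∈ N.map M.subtype := by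
      rintro f hf _ ⟨m, hm, rfl⟩
      obtain ⟨a, rfl⟩ := hφ.exists_eq hf
      exact ⟨ρ a m, hN a m hm, rfl⟩
    have hle := orbitModule_le_of_act_mem hop hample hN' ⟨m, hmN, rfl⟩ m.2
      fun h => hm0 (Subtype.ext (Subtype.ext h))
    refine eq_top_iff.2 fun m' _ => ?_
    obtain ⟨m'', hm'', he⟩ := hle m'.2
    rwa [← Subtype.ext he]
  · intro a ha
    refine hφ.injective (hφ.map_zero ▸ ?_)
    exact eq_zero_of_forall_act_single_eq_zero heff hample hdense (hφ.mem_algebraSet a)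
      fun z hz => congrArg Subtype.val (ha ⟨_, single_mem_orbitModule hz 1⟩)

end EtaleGroupoid

/-- For an effective Hausdorff ample groupoid with second
countable unit space and a field `k`, the convolution algebra `kG` (realized as
any ring `A` isomorphic to the span of compactly supported characteristic
functions with convolution product) is prime iff it is primitive. -/
theorem stmt12 (k : Type) [Field k] (G : EtaleGroupoid.{0}) [T2Space G.Arr]
    (hample : G.Ample) (heff : G.Effective)
    [SecondCountableTopology ↥G.units]
    (A : Type) [NonUnitalRing A] (φ : A → (G.Arr → k))
    (hadd : ∀ a b : A, φ (a + b) = φ a + φ b)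
    (hmul : ∀ a b : A, φ (a * b) = G.conv (φ a) (φ b))
    (hinj : Function.Injective φ)
    (hrange : Set.range φ = G.AlgebraSet k) :
    IsPrimeRingE A ↔ IsPrimitiveRingE A := by
  have hφ : G.IsConvolutionAlgebra φ := ⟨hadd, hmul, hinj, hrange⟩
  refine ⟨fun hprime => ?_, IsPrimitiveRingE.isPrimeRingE⟩
  have hkG := hφ.algPrime hprime
  obtain ⟨f, -, hf0⟩ := hkG.1
  obtain ⟨g, -⟩ := Function.ne_iff.1 hf0
  have htrans := G.topTransitive_of_algPrime (G.isOpen_units_of_effective heff) hample hkG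
  obtain ⟨x, hx, hdense⟩ := G.exists_unitsDense_orbit hample htrans ⟨_, G.d_mem_units g⟩
  exact hφ.isPrimitiveRingE heff hample hx hdense
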